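/- Reduction of constraint-only variables: let M = {t ground | size(t) ≤ size(β)} for a fixed ground term β. Let A = {Γ ∥ s₁, …, Γ ∥ sₙ} be a class all of whose constrained terms carry the same constraint Γ, let Y = vars(Γ) \ (vars(s₁) ∪ … ∪ vars(sₙ)) be the variables occurring in Γ but in none of the terms s₁, …, sₙ, and let σ map every variable of Y to a single fresh variable y' ∈ 𝒳. Then A subsumes Aσ and Aσ subsumes A; in particular gnd(A) = gnd(Aσ). -/

import Mathlib

namespace NGCC

inductive Tm (F : Type) : Type
  | var : ℕ → Tm F
  | app : F → List (Tm F) → Tm F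

instance {F : Type} : Inhabited (Tm F) := ⟨Tm.var 0⟩

namespace Tm
variable {F : Type}

def subst (σ : ℕ → Tm F) : Tm F → Tm F
  | var x => σ x
  | app f ts => app f (ts.attach.map fun t => t.1.subst σ)
  decreasing_by simp only [app.sizeOf_spec]; have h := List.sizeOf_lt_of_mem t.2; omega

def varsList : Tm F → List ℕ
  | var x => [x]
  | app _ ts => (ts.attach.map fun t => t.1.varsList).flatten
  decreasing_by simp only [app.sizeOf_spec]; have h := List.sizeOf_lt_of_mem t.2; omega

def varsIn (t : Tm F) : Set ℕ := {x | x ∈ t.varsList}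

def Ground (t : Tm F) : Prop := t.varsList = []

def size : Tm F → ℕ
  | var _ => 1
  | app _ ts => 1 + (ts.attach.map fun t => t.1.size).sum
  decreasing_by simp only [app.sizeOf_spec]; have h := List.sizeOf_lt_of_mem t.2; omega

def count (x : ℕ) : Tm F → ℕ
  | var y => if y = x then 1 else 0
  | app _ ts => (ts.attach.map fun t => count x t.1).sum
  decreasing_by simp only [app.sizeOf_spec]; have h := List.sizeOf_lt_of_mem t.2; omega

def eval {α : Type} (I : F → List α → α) (v : ℕ → α) : Tm F → α
  | var x => v x
  | app f ts => I f (ts.attach.map fun t => t.1.eval I v)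
  decreasing_by simp only [app.sizeOf_spec]; have h := List.sizeOf_lt_of_mem t.2; omega

end Tm


abbrev Subst (F : Type) := ℕ → Tm F

def Subst.dom {F : Type} (σ : Subst F) : Set ℕ := {x | σ x ≠ Tm.var x}

def Subst.comp {F : Type} (σ δ : Subst F) : Subst F := fun x => (σ x).subst δ

structure CTerm (F : Type) where
  constr : Set (Tm F)
  term : Tm F

abbrev CClass (F : Type) := Set (CTerm F)

variable {F : Type}

/-- Application of a substitution to a constraint (set of atoms `u ∈ M`). -/
def substConstr (Γ : Set (Tm F)) (σ : Subst F) : Set (Tm F) := (fun u => u.subst σ) '' Γ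

def CTerm.subst (ct : CTerm F) (σ : Subst F) : CTerm F :=
  ⟨substConstr ct.constr σ, ct.term.subst σ⟩

def substClass (A : CClass F) (σ : Subst F) : CClass F := (fun ct => ct.subst σ) '' A

/-- `Γσ` is true: every atom of `Γσ` belongs to `M`. -/
def ConstrHolds (M : Set (Tm F)) (Γ : Set (Tm F)) (σ : Subst F) : Prop :=
  substConstr Γ σ ⊆ M

/-- Satisfiability of a constraint with respect to `M`. -/
def ConstrSat (M : Set (Tm F)) (Γ : Set (Tm F)) : Prop :=
  ∃ σ : Subst F, ConstrHolds M Γ σ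

/-- `σ` is grounding for the class `A` (for all its constrained terms). -/
def GroundingForClass (σ : Subst F) (A : CClass F) : Prop :=
  ∀ ct ∈ A, (ct.term.subst σ).Ground ∧ ∀ u ∈ ct.constr, (u.subst σ).Ground

/-- Separating variables of a class. -/
def sepVars (A : CClass F) : Set ℕ := ⋂ ct ∈ A, (CTerm.term ct).varsIn

/-- All variables of the terms of a class. -/
def termVars (A : CClass F) : Set ℕ := ⋃ ct ∈ A, (CTerm.term ct).varsIn

/-- Free variables of a class. -/
def freeVars (A : CClass F) : Set ℕ := termVars A \ sepVars A

/-- All variables occurring in a class (terms and constraints). -/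
def varsAll (A : CClass F) : Set ℕ :=
  ⋃ ct ∈ A, ((CTerm.term ct).varsIn ∪ ⋃ u ∈ CTerm.constr ct, u.varsIn)

/-- `gnd'(A)`. -/
def gnd' (M : Set (Tm F)) (A : CClass F) : Set (CClass F) :=
  { B | ∃ σ : Subst F, Subst.dom σ = sepVars A ∧ (∀ x ∈ Subst.dom σ, (σ x).Ground) ∧
      B = { ct' | ∃ ct ∈ A, ConstrSat M (substConstr (CTerm.constr ct) σ) ∧ ct' = ct.subst σ } }

/-- `gnd(A)`: sets of ground terms. -/
def gnd (M : Set (Tm F)) (A : CClass F) : Set (Set (Tm F)) :=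
  { S | ∃ B ∈ gnd' M A,
      S = { t | ∃ σ : Subst F, GroundingForClass σ B ∧
              ∃ ct ∈ B, ConstrHolds M (CTerm.constr ct) σ ∧ t = (CTerm.term ct).subst σ } }

/-- The elements of `gnd(A)` regarded as classes of constrained ground terms. -/
def gndCl (M : Set (Tm F)) (A : CClass F) : Set (CClass F) :=
  { S | ∃ B ∈ gnd' M A,
      S = { ct' | ∃ σ : Subst F, GroundingForClass σ B ∧
              ∃ ct ∈ B, ConstrHolds M (CTerm.constr ct) σ ∧ ct' = ct.subst σ } }

/-- `B` subsumes `A`. -/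
def Subsumes (M : Set (Tm F)) (B A : CClass F) : Prop :=
  ∀ A' ∈ gnd M A, ∃ B' ∈ gnd M B, A' ⊆ B'

/-- `A` is `M`-constrained: the atom `sᵢ ∈ M` occurs in `Γᵢ` for each `Γᵢ ∥ sᵢ ∈ A`. -/
def MConstrained (A : CClass F) : Prop := ∀ ct ∈ A, CTerm.term ct ∈ CTerm.constr ct

/-- `ρ` is a renaming of the free variables of `A` to fresh variables. -/
def IsNormRenaming (A : CClass F) (ρ : Subst F) : Prop :=
  (∀ x, ∃ y, ρ x = Tm.var y) ∧ (∀ x, x ∉ freeVars A → ρ x = Tm.var x) ∧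
  (∀ x ∈ freeVars A, ∀ x' ∈ freeVars A, ρ x = ρ x' → x = x') ∧
  (∀ x ∈ freeVars A, ∀ y, ρ x = Tm.var y → y ∉ varsAll A)

/-- The normal class `norm(A)` for the renaming `ρ`. -/
def normC (A : CClass F) (ρ : Subst F) : CClass F :=
  { ct' | ∃ ct ∈ A, ct' = ⟨CTerm.constr ct ∪ substConstr (CTerm.constr ct) ρ, CTerm.term ct⟩ } ∪
  { ct' | ∃ ct ∈ A, ((CTerm.term ct).varsIn ∩ freeVars A).Nonempty ∧
      ct' = ⟨CTerm.constr ct ∪ substConstr (CTerm.constr ct) ρ, (CTerm.term ct).subst ρ⟩ }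

/-- `Aμ` for a grounding substitution `μ`: the set of ground terms
`{sμ | Γ ∥ s ∈ A and Γμ true}`. -/
def applyClass (M : Set (Tm F)) (A : CClass F) (μ : Subst F) : Set (Tm F) :=
  { t | ∃ ct ∈ A, ConstrHolds M (CTerm.constr ct) μ ∧ t = (CTerm.term ct).subst μ }

/-- Subterm relation. -/
inductive Subterm {F : Type} : Tm F → Tm F → Prop
  | refl (t : Tm F) : Subterm t t
  | app {s t : Tm F} (f : F) (ts : List (Tm F)) : t ∈ ts → Subterm s t → Subterm s (Tm.app f ts)

/-- `s` occurs as a (sub)term in `Π`. -/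
def OccursIn (s : Tm F) (P : Set (CClass F)) : Prop :=
  ∃ A ∈ P, ∃ ct ∈ A, Subterm s (CTerm.term ct) ∨ ∃ u ∈ CTerm.constr ct, Subterm s u

/-- `M` is `Π`-closed for the ground term `t`. -/
def PiClosed (M : Set (Tm F)) (P : Set (CClass F)) (t : Tm F) : Prop :=
  ∀ s, OccursIn s P → ∀ σ : Subst F, s.subst σ ∈ M →
    ∀ δ : Subst F, (∀ x, σ x ≠ δ x → δ x = t) → s.subst δ ∈ M

/-- Semantic equational consequence: every model of the (implicitly universally
quantified) equations is a model of `s ≈ t`. -/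
def Entails (Eqs : Set (Tm F × Tm F)) (s t : Tm F) : Prop :=
  ∀ (α : Type) (_ : Nonempty α) (I : F → List α → α) (v : ℕ → α),
    (∀ e ∈ Eqs, ∀ w : ℕ → α, Tm.eval I w e.1 = Tm.eval I w e.2) →
    Tm.eval I v s = Tm.eval I v t

/-- `gnd_M(E)`: ground instances of equations of `E` with all ground terms in `M`. -/
def gndM (M : Set (Tm F)) (E : Set (Tm F × Tm F)) : Set (Tm F × Tm F) :=
  { e | ∃ p ∈ E, ∃ σ : Subst F,
      e = (Tm.subst σ p.1, Tm.subst σ p.2) ∧ Tm.subst σ p.1 ∈ M ∧ Tm.subst σ p.2 ∈ M }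

def IsUnifier (μ : Subst F) (s t : Tm F) : Prop := s.subst μ = t.subst μ

def IsMGU (μ : Subst F) (s t : Tm F) : Prop :=
  IsUnifier μ s t ∧ ∀ τ : Subst F, IsUnifier τ s t → ∃ δ : Subst F, τ = Subst.comp μ δ

/-- Simultaneous most general unifier of the equations `s₁ = t₁` and `s₂ = t₂`. -/
def IsSimMGU (μ : Subst F) (s₁ t₁ s₂ t₂ : Tm F) : Prop :=
  IsUnifier μ s₁ t₁ ∧ IsUnifier μ s₂ t₂ ∧
  ∀ τ : Subst F, IsUnifier τ s₁ t₁ → IsUnifier τ s₂ t₂ → ∃ δ : Subst F, τ = Subst.comp μ δ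

/-- Conjoin a constraint to every constrained term of a class. -/
def addConstr (A : CClass F) (Γ : Set (Tm F)) : CClass F :=
  { ct' | ∃ ct ∈ A, ct' = ⟨CTerm.constr ct ∪ Γ, CTerm.term ct⟩ }

/-- The rules of the calculus CC(X). -/
inductive Step {F : Type} (M : Set (Tm F)) : Set (CClass F) → Set (CClass F) → Prop
  | merge (P : Set (CClass F)) (A B C' : CClass F) (ρA ρB μ : Subst F) (ct₁ ct₂ : CTerm F)
      (hA : A ∈ P) (hB : B ∈ P)
      (hρA : IsNormRenaming A ρA) (hρB : IsNormRenaming B ρB)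
      (h1 : ct₁ ∈ A) (h2 : ct₂ ∈ B)
      (hmgu : IsMGU μ ct₁.term ct₂.term)
      (hC' : C' = substClass (addConstr (normC A ρA) (ct₁.constr ∪ ct₂.constr) ∪
                               addConstr (normC B ρB) (ct₁.constr ∪ ct₂.constr)) μ)
      (hnsub : ∀ C ∈ P, ¬ Subsumes M C C') :
      Step M P (insert C' P)
  | deduction (P : Set (CClass F)) (A B C' : CClass F) (f : F)
      (ss ts ss' ts' : List (Tm F)) (Γ Δ : Set (Tm F)) (Γs Δs : List (Set (Tm F))) (μ : Subst F)
      (hA : A ∈ P) (hB : B ∈ P)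
      (h1 : (⟨Γ, Tm.app f ss⟩ : CTerm F) ∈ A)
      (h2 : (⟨Δ, Tm.app f ts⟩ : CTerm F) ∈ B)
      (hl1 : ss'.length = ss.length) (hl2 : ts'.length = ss.length)
      (hl3 : ts.length = ss.length) (hl4 : Γs.length = ss.length) (hl5 : Δs.length = ss.length)
      (hside : ∀ i < ss.length, ∃ D ∈ P, ∃ ρ : Subst F, IsNormRenaming D ρ ∧
          (⟨Γs[i]!, ss'[i]!⟩ : CTerm F) ∈ normC D ρ ∧ (⟨Δs[i]!, ts'[i]!⟩ : CTerm F) ∈ normC D ρ)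
      (hmgu : IsSimMGU μ (Tm.app f ss') (Tm.app f ss) (Tm.app f ts') (Tm.app f ts))
      (hC' : C' = substClass
          ({⟨Γ ∪ Δ ∪ ⋃₀ {G | G ∈ Γs} ∪ ⋃₀ {G | G ∈ Δs}, Tm.app f ss'⟩,
            ⟨Γ ∪ Δ ∪ ⋃₀ {G | G ∈ Γs} ∪ ⋃₀ {G | G ∈ Δs}, Tm.app f ts'⟩} : CClass F) μ)
      (hnsub : ∀ C ∈ P, ¬ Subsumes M C C') :
      Step M P (insert C' P)
  | subsump (P : Set (CClass F)) (A B : CClass F)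
      (hA : A ∈ P) (hB : B ∈ P) (hne : A ≠ B) (hsub : Subsumes M B A) :
      Step M P (P \ {A})

/-- The single-term class `{f(x₁,…,x_k) ∈ M ∥ f(x₁,…,x_k)}`. -/
def singleTermClass (ar : F → ℕ) (f : F) : CClass F :=
  {⟨{Tm.app f ((List.range (ar f)).map Tm.var)}, Tm.app f ((List.range (ar f)).map Tm.var)⟩}

/-- The initial state `Π₀` of CC(X) for the equations `E`. -/
def initState (ar : F → ℕ) (E : Set (Tm F × Tm F)) : Set (CClass F) :=
  { A | ∃ p ∈ E, A = ({⟨{p.1, p.2}, p.1⟩, ⟨{p.1, p.2}, p.2⟩} : CClass F) } ∪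
  { A | ∃ f : F, A = singleTermClass ar f }

/-- `B` subsumes `A` by matching. -/
def SubsumesByMatching (M : Set (Tm F)) (B A : CClass F) : Prop :=
  ∃ σ : Subst F, Subst.dom σ ⊆ sepVars B ∧ (∀ x ∈ sepVars B, (σ x).varsIn ⊆ varsAll A) ∧
    ∀ ct ∈ A, ∃ τ : Subst F, Subst.dom τ ⊆ freeVars B ∧
      (∀ y ∈ freeVars B, (τ y).varsIn ⊆ varsAll A) ∧
      ∃ ct' ∈ B, CTerm.term ct = ((CTerm.term ct').subst σ).subst τ ∧
        ∀ δ : Subst F, ConstrHolds M (CTerm.constr ct) δ →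
          ∃ δ' : Subst F,
            ConstrHolds M (substConstr (substConstr (substConstr (CTerm.constr ct') σ) τ) δ) δ'

/-- `M` determined by the symbol-count ordering and a bound `β`. -/
def Mle (β : Tm F) : Set (Tm F) := { t | t.Ground ∧ t.size ≤ β.size }

def varsFinset (t : Tm F) : Finset ℕ := t.varsList.toFinset

/-- Truth of the LIA abstraction `lic(t ⪯ β)` under an integer assignment `v`. -/
def licHolds (t β : Tm F) (v : ℕ → ℕ) : Prop :=
  (∀ x ∈ varsFinset t, 1 ≤ v x) ∧
  (∑ x ∈ varsFinset t, (t.count x : ℤ) * (v x : ℤ)) ≤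
    (β.size : ℤ) - ((t.size : ℤ) - ∑ x ∈ varsFinset t, (t.count x : ℤ))
/-
A ground instance of `A` is produced by a grounding `μ` of a class `Aτ` in `gnd'(A)`. Since `σ`
fixes the separating variables and `τ` grounds exactly those, `σ` and `τ` commute, so the classes
of `gnd'(Aσ)` are the classes `(Aτ)σ`. A grounding `μ'` of `(Aτ)σ` yields the grounding `σμ'` of
`Aτ` with the same instances. Conversely a grounding `μ` of `Aτ` is turned into one of `(Aτ)σ` by
sending the fresh variable `y'` to a ground term of size 1: the terms are unchanged, and each atom
`uσ` of the constraint is instantiated to a ground term no larger than `uμ`, hence still in `M`.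
-/

namespace Tm

@[induction_eliminator]
theorem rec_mem {motive : Tm F → Prop} (var : ∀ x, motive (var x))
    (app : ∀ f ts, (∀ t ∈ ts, motive t) → motive (app f ts)) : ∀ t, motive t
  | .var x => var x
  | .app f ts => app f ts fun t _ => rec_mem var app t
  decreasing_by simp only [Tm.app.sizeOf_spec]; have := List.sizeOf_lt_of_mem ‹t ∈ ts›; omega

theorem subst_app (σ : Subst F) (f : F) (ts : List (Tm F)) :
    (app f ts).subst σ = app f (ts.map (·.subst σ)) := by
  rw [subst, List.attach_map_val]

theorem varsList_app (f : F) (ts : List (Tm F)) :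
    (app f ts).varsList = (ts.map varsList).flatten := by
  rw [varsList, List.attach_map_val]

theorem size_app (f : F) (ts : List (Tm F)) : (app f ts).size = 1 + (ts.map size).sum := by
  rw [size, List.attach_map_val]

theorem mem_varsList_app {f : F} {ts : List (Tm F)} {x : ℕ} :
    x ∈ (app f ts).varsList ↔ ∃ t ∈ ts, x ∈ t.varsList := by
  simp [varsList_app]

theorem mem_varsList_subst {σ : Subst F} {t : Tm F} {x : ℕ} :
    x ∈ (t.subst σ).varsList ↔ ∃ y ∈ t.varsList, x ∈ (σ y).varsList := by
  induction t with
  | var z => simp [subst, varsList]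
  | app f ts ih =>
    simp only [subst_app, mem_varsList_app, List.mem_map]
    grind

theorem ground_iff {t : Tm F} : t.Ground ↔ ∀ x, x ∉ t.varsList :=
  List.eq_nil_iff_forall_not_mem

theorem ground_subst_iff {σ : Subst F} {t : Tm F} :
    (t.subst σ).Ground ↔ ∀ x ∈ t.varsList, (σ x).Ground := by
  simp only [ground_iff, mem_varsList_subst]
  grind

theorem subst_congr {σ τ : Subst F} {t : Tm F} (h : ∀ x ∈ t.varsList, σ x = τ x) :
    t.subst σ = t.subst τ := by
  induction t with
  | var z => simpa [subst, varsList] using h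
  | app f ts ih =>
    simp only [subst_app, app.injEq, true_and]
    exact List.map_congr_left fun t ht =>
      ih t ht fun x hx => h x (mem_varsList_app.2 ⟨t, ht, hx⟩)

theorem subst_var (t : Tm F) : t.subst var = t := by
  induction t with
  | var z => rw [subst]
  | app f ts ih => rw [subst_app, List.map_congr_left ih, List.map_id']

theorem subst_subst (σ τ : Subst F) (t : Tm F) :
    (t.subst σ).subst τ = t.subst (Subst.comp σ τ) := by
  induction t with
  | var z => simp only [subst, Subst.comp]
  | app f ts ih => simp only [subst_app, List.map_map]; exact congrArg _ (List.map_congr_left ih)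

theorem subst_eq_self {σ : Subst F} {t : Tm F} (h : ∀ x ∈ t.varsList, σ x = var x) :
    t.subst σ = t :=
  (subst_congr h).trans (subst_var t)

theorem Ground.subst_eq {t : Tm F} (ht : t.Ground) (σ : Subst F) : t.subst σ = t :=
  subst_eq_self fun x hx => absurd hx (ground_iff.1 ht x)

theorem not_ground_var (x : ℕ) : ¬ (var x : Tm F).Ground := by
  simp [Ground, varsList]

theorem exists_ground_size_eq_one [Nonempty F] : ∃ c : Tm F, c.Ground ∧ c.size = 1 :=
  let ⟨f⟩ := ‹Nonempty F›
  ⟨app f [], by simp [Ground, varsList_app], by simp [size_app]⟩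

theorem one_le_size (t : Tm F) : 1 ≤ t.size := by
  cases t with
  | var z => rw [size]
  | app f ts => rw [size_app]; omega

theorem size_subst_le_size_subst {σ τ : Subst F} {t : Tm F}
    (h : ∀ x ∈ t.varsList, (σ x).size ≤ (τ x).size) : (t.subst σ).size ≤ (t.subst τ).size := by
  induction t with
  | var z => simpa [subst, varsList] using h
  | app f ts ih =>
    simp only [subst_app, size_app, List.map_map, add_le_add_iff_left]
    exact List.sum_le_sum fun t ht =>
      ih t ht fun x hx => h x (mem_varsList_app.2 ⟨t, ht, hx⟩)

theorem mem_varsList_of_mem_subst {τ : Subst F} (hτ : ∀ x, τ x = var x ∨ (τ x).Ground)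
    {t : Tm F} {x : ℕ} (hx : x ∈ (t.subst τ).varsList) : x ∈ t.varsList := by
  obtain ⟨y, hy, hxy⟩ := mem_varsList_subst.1 hx
  rcases hτ y with h | h
  · rw [h, varsList, List.mem_singleton] at hxy
    rwa [hxy]
  · exact absurd hxy (ground_iff.1 h x)

end Tm

open Tm

theorem Subst.var_or_ground {τ : Subst F} (h : ∀ x ∈ Subst.dom τ, (τ x).Ground) (x : ℕ) :
    τ x = var x ∨ (τ x).Ground := by
  by_cases hx : τ x = var x
  exacts [Or.inl hx, Or.inr (h x hx)]

theorem Subst.comp_comm {σ τ : Subst F} {y : ℕ} (hσ : ∀ x, σ x = var x ∨ σ x = var y)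
    (hτ : ∀ x, τ x = var x ∨ (τ x).Ground) (hστ : ∀ x, (τ x).Ground → σ x = var x)
    (hτy : τ y = var y) : Subst.comp σ τ = Subst.comp τ σ := by
  funext x
  simp only [Subst.comp]
  rcases hτ x with h | h
  · rw [h, Tm.subst]
    rcases hσ x with h' | h' <;> rw [h', Tm.subst]
    exacts [h, hτy]
  · rw [hστ x h, Tm.subst, h.subst_eq]

theorem substConstr_substConstr (Γ : Set (Tm F)) (σ τ : Subst F) :
    substConstr (substConstr Γ σ) τ = substConstr Γ (Subst.comp σ τ) := by
  simp only [substConstr, Set.image_image, Tm.subst_subst]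

theorem CTerm.subst_subst (ct : CTerm F) (σ τ : Subst F) :
    (ct.subst σ).subst τ = ct.subst (Subst.comp σ τ) := by
  simp only [CTerm.subst, substConstr_substConstr, Tm.subst_subst]

theorem constrHolds_iff {M Γ : Set (Tm F)} {μ : Subst F} :
    ConstrHolds M Γ μ ↔ ∀ u ∈ Γ, u.subst μ ∈ M :=
  Set.image_subset_iff

theorem groundingForClass_substClass_iff {B : CClass F} {σ μ : Subst F} :
    GroundingForClass μ (substClass B σ) ↔ GroundingForClass (Subst.comp σ μ) B := by
  simp only [GroundingForClass, substClass, Set.forall_mem_image, CTerm.subst, substConstr,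
    Tm.subst_subst]

theorem subsumes_of_gnd_subset {M : Set (Tm F)} {A B : CClass F} (h : gnd M A ⊆ gnd M B) :
    Subsumes M B A :=
  fun A' hA' => ⟨A', h hA', subset_rfl⟩

section FreshUpdate

variable {σ μ : Subst F} {y : ℕ} {c u : Tm F}

theorem comp_update_eq_or {x : ℕ} (hσ : σ x = var x ∨ σ x = var y) (hxy : x ≠ y) :
    Subst.comp σ (Function.update μ y c) x = μ x ∨ Subst.comp σ (Function.update μ y c) x = c := by
  rcases hσ with h | h <;> simp [Subst.comp, h, hxy, Tm.subst]

theorem ground_subst_subst_update (hc : c.Ground) (hσ : ∀ x, σ x = var x ∨ σ x = var y)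
    (hy : y ∉ u.varsList) (hu : (u.subst μ).Ground) :
    ((u.subst σ).subst (Function.update μ y c)).Ground := by
  rw [Tm.subst_subst, ground_subst_iff]
  intro x hx
  rcases comp_update_eq_or (hσ x) (ne_of_mem_of_not_mem hx hy) with h | h <;> rw [h]
  exacts [ground_subst_iff.1 hu x hx, hc]

theorem subst_subst_update_mem_Mle {β : Tm F} (hc : c.Ground) (hc₁ : c.size = 1)
    (hσ : ∀ x, σ x = var x ∨ σ x = var y) (hy : y ∉ u.varsList) (hu : u.subst μ ∈ Mle β) :
    (u.subst σ).subst (Function.update μ y c) ∈ Mle β := by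
  have hsize : ((u.subst σ).subst (Function.update μ y c)).size ≤ (u.subst μ).size := by
    rw [Tm.subst_subst]
    refine size_subst_le_size_subst fun x hx => ?_
    rcases comp_update_eq_or (hσ x) (ne_of_mem_of_not_mem hx hy) with h | h
    · rw [h]
    · rw [h, hc₁]; exact one_le_size _
  exact ⟨ground_subst_subst_update hc hσ hy hu.1, hsize.trans hu.2⟩

theorem subst_subst_update_of_fixed (hfix : ∀ x ∈ u.varsList, σ x = var x)
    (hy : y ∉ u.varsList) : (u.subst σ).subst (Function.update μ y c) = u.subst μ := by
  rw [subst_eq_self hfix]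
  exact subst_congr fun x hx => Function.update_of_ne (ne_of_mem_of_not_mem hx hy) _ _

end FreshUpdate

theorem mem_termVars {A : CClass F} {ct : CTerm F} (hct : ct ∈ A) {x : ℕ}
    (hx : x ∈ ct.term.varsList) : x ∈ termVars A :=
  Set.mem_biUnion hct hx

theorem mem_varsAll_of_mem_term {A : CClass F} {ct : CTerm F} (hct : ct ∈ A) {x : ℕ}
    (hx : x ∈ ct.term.varsList) : x ∈ varsAll A :=
  Set.mem_biUnion hct (Or.inl hx)

theorem mem_varsAll_of_mem_constr {A : CClass F} {ct : CTerm F} (hct : ct ∈ A) {u : Tm F}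
    (hu : u ∈ ct.constr) {x : ℕ} (hx : x ∈ u.varsList) : x ∈ varsAll A :=
  Set.mem_biUnion hct (Or.inr (Set.mem_biUnion hu hx))

theorem mem_term_of_mem_sepVars {A : CClass F} {x : ℕ} (hx : x ∈ sepVars A) {ct : CTerm F}
    (hct : ct ∈ A) : x ∈ ct.term.varsList :=
  Set.mem_iInter₂.1 hx ct hct

theorem sepVars_substClass {A : CClass F} {σ : Subst F}
    (hfix : ∀ x ∈ termVars A, σ x = var x) : sepVars (substClass A σ) = sepVars A := by
  simp only [sepVars, substClass, Set.biInter_image]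
  refine Set.iInter₂_congr fun ct hct => ?_
  rw [CTerm.subst, subst_eq_self fun x hx => hfix x (mem_termVars hct hx)]

def satInst (M : Set (Tm F)) (A : CClass F) (τ : Subst F) : CClass F :=
  { ct' | ∃ ct ∈ A, ConstrSat M (substConstr (CTerm.constr ct) τ) ∧ ct' = ct.subst τ }

def groundInstances (M : Set (Tm F)) (B : CClass F) : Set (Tm F) :=
  { t | ∃ μ : Subst F, GroundingForClass μ B ∧
      ∃ ct ∈ B, ConstrHolds M (CTerm.constr ct) μ ∧ t = (CTerm.term ct).subst μ }

theorem gnd'_eq_image (M : Set (Tm F)) (A : CClass F) :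
    gnd' M A = satInst M A ''
      {τ | Subst.dom τ = sepVars A ∧ ∀ x ∈ Subst.dom τ, (τ x).Ground} := by
  ext B
  constructor
  · rintro ⟨τ, hdom, hgr, rfl⟩
    exact ⟨τ, ⟨hdom, hgr⟩, rfl⟩
  · rintro ⟨τ, ⟨hdom, hgr⟩, rfl⟩
    exact ⟨τ, hdom, hgr, rfl⟩

theorem gnd_eq_image (M : Set (Tm F)) (A : CClass F) :
    gnd M A = groundInstances M '' gnd' M A := by
  ext S
  constructor
  · rintro ⟨B, hB, rfl⟩
    exact ⟨B, hB, rfl⟩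
  · rintro ⟨B, hB, rfl⟩
    exact ⟨B, hB, rfl⟩

theorem termVars_satInst_subset {M : Set (Tm F)} {A : CClass F} {τ : Subst F}
    (hτ : ∀ x, τ x = var x ∨ (τ x).Ground) : termVars (satInst M A τ) ⊆ termVars A := by
  rintro x hx
  obtain ⟨_, ⟨ct, hct, -, rfl⟩, hx⟩ := Set.mem_iUnion₂.1 hx
  exact mem_termVars hct (mem_varsList_of_mem_subst hτ hx)

theorem varsAll_satInst_subset {M : Set (Tm F)} {A : CClass F} {τ : Subst F}
    (hτ : ∀ x, τ x = var x ∨ (τ x).Ground) : varsAll (satInst M A τ) ⊆ varsAll A := by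
  rintro x hx
  obtain ⟨_, ⟨ct, hct, -, rfl⟩, hx | hx⟩ := Set.mem_iUnion₂.1 hx
  · exact mem_varsAll_of_mem_term hct (mem_varsList_of_mem_subst hτ hx)
  · obtain ⟨_, ⟨u, hu, rfl⟩, hx⟩ := Set.mem_iUnion₂.1 hx
    exact mem_varsAll_of_mem_constr hct hu (mem_varsList_of_mem_subst hτ hx)

theorem satInst_substClass {M : Set (Tm F)} {A : CClass F} {σ τ : Subst F}
    (hcomm : Subst.comp σ τ = Subst.comp τ σ)
    (hsat : ∀ ct ∈ A, ConstrSat M (substConstr (substConstr ct.constr τ) σ) ↔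
      ConstrSat M (substConstr ct.constr τ)) :
    satInst M (substClass A σ) τ = substClass (satInst M A τ) σ := by
  have hconstr (ct : CTerm F) :
      substConstr (ct.subst σ).constr τ = substConstr (substConstr ct.constr τ) σ := by
    rw [CTerm.subst, substConstr_substConstr, hcomm, substConstr_substConstr]
  have hterm (ct : CTerm F) : (ct.subst σ).subst τ = (ct.subst τ).subst σ := by
    rw [CTerm.subst_subst, hcomm, CTerm.subst_subst]
  ext ct'
  constructor
  · rintro ⟨_, ⟨ct, hct, rfl⟩, hs, rfl⟩
    rw [hconstr, hsat ct hct] at hs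
    exact ⟨ct.subst τ, ⟨ct, hct, hs, rfl⟩, (hterm ct).symm⟩
  · rintro ⟨_, ⟨ct, hct, hs, rfl⟩, rfl⟩
    rw [← hsat ct hct, ← hconstr] at hs
    exact ⟨ct.subst σ, ⟨ct, hct, rfl⟩, hs, (hterm ct).symm⟩

theorem constrHolds_substConstr_iff {M Γ : Set (Tm F)} {σ μ : Subst F} :
    ConstrHolds M (substConstr Γ σ) μ ↔ ConstrHolds M Γ (Subst.comp σ μ) := by
  rw [ConstrHolds, ConstrHolds, substConstr_substConstr]

section Collapse

variable [Nonempty F] {β : Tm F} {σ : Subst F} {y : ℕ}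

theorem constrSat_substConstr_iff {Γ : Set (Tm F)} (hσ : ∀ x, σ x = var x ∨ σ x = var y)
    (hy : ∀ u ∈ Γ, y ∉ u.varsList) :
    ConstrSat (Mle β) (substConstr Γ σ) ↔ ConstrSat (Mle β) Γ := by
  obtain ⟨c, hc, hc₁⟩ := exists_ground_size_eq_one (F := F)
  constructor
  · rintro ⟨δ, hδ⟩
    exact ⟨Subst.comp σ δ, constrHolds_substConstr_iff.1 hδ⟩
  · rintro ⟨δ, hδ⟩
    refine ⟨Function.update δ y c, constrHolds_iff.2 ?_⟩
    rintro _ ⟨u, hu, rfl⟩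
    exact subst_subst_update_mem_Mle hc hc₁ hσ (hy u hu) (constrHolds_iff.1 hδ u hu)

theorem groundInstances_substClass {B : CClass F} (hσ : ∀ x, σ x = var x ∨ σ x = var y)
    (hfix : ∀ x ∈ termVars B, σ x = var x) (hy : y ∉ varsAll B) :
    groundInstances (Mle β) (substClass B σ) = groundInstances (Mle β) B := by
  obtain ⟨c, hc, hc₁⟩ := exists_ground_size_eq_one (F := F)
  have hterm {ct : CTerm F} (hct : ct ∈ B) (μ : Subst F) :
      (ct.term.subst σ).subst (Function.update μ y c) = ct.term.subst μ :=
    subst_subst_update_of_fixed (fun x hx => hfix x (mem_termVars hct hx))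
      fun h => hy (mem_varsAll_of_mem_term hct h)
  have hyconstr {ct : CTerm F} (hct : ct ∈ B) {u : Tm F} (hu : u ∈ ct.constr) :
      y ∉ u.varsList :=
    fun h => hy (mem_varsAll_of_mem_constr hct hu h)
  ext t
  constructor
  · rintro ⟨μ, hμ, _, ⟨ct, hct, rfl⟩, hholds, rfl⟩
    exact ⟨Subst.comp σ μ, groundingForClass_substClass_iff.1 hμ, ct, hct,
      constrHolds_substConstr_iff.1 hholds, Tm.subst_subst _ _ _⟩
  · rintro ⟨μ, hμ, ct, hct, hholds, rfl⟩
    refine ⟨Function.update μ y c, ?_, ct.subst σ, ⟨ct, hct, rfl⟩, ?_, (hterm hct μ).symm⟩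
    · rintro _ ⟨ct', hct', rfl⟩
      refine ⟨(hterm hct' μ).symm ▸ (hμ ct' hct').1, ?_⟩
      rintro _ ⟨u, hu, rfl⟩
      exact ground_subst_subst_update hc hσ (hyconstr hct' hu) ((hμ ct' hct').2 u hu)
    · refine constrHolds_iff.2 ?_
      rintro _ ⟨u, hu, rfl⟩
      exact subst_subst_update_mem_Mle hc hc₁ hσ (hyconstr hct hu) (constrHolds_iff.1 hholds u hu)

theorem gnd_substClass_eq {A : CClass F} (hσ : ∀ x, σ x = var x ∨ σ x = var y)
    (hfix : ∀ x ∈ termVars A, σ x = var x) (hy : y ∉ varsAll A) :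
    gnd (Mle β) (substClass A σ) = gnd (Mle β) A := by
  rcases A.eq_empty_or_nonempty with rfl | ⟨ct₀, hct₀⟩
  · rw [substClass, Set.image_empty]
  rw [gnd_eq_image, gnd_eq_image, gnd'_eq_image, gnd'_eq_image, sepVars_substClass hfix,
    Set.image_image, Set.image_image]
  refine Set.image_congr fun τ ⟨hdom, hgr⟩ => ?_
  have hτ := Subst.var_or_ground hgr
  have hστ (x : ℕ) (hx : (τ x).Ground) : σ x = var x := by
    have hxsep : x ∈ sepVars A := hdom ▸ fun h => not_ground_var x (h ▸ hx)
    exact hfix x (mem_termVars hct₀ (mem_term_of_mem_sepVars hxsep hct₀))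
  have hτy : τ y = var y := by
    by_contra h
    exact hy (mem_varsAll_of_mem_term hct₀ (mem_term_of_mem_sepVars (hdom ▸ h) hct₀))
  have hsat (ct : CTerm F) (hct : ct ∈ A) :
      ConstrSat (Mle β) (substConstr (substConstr ct.constr τ) σ) ↔
        ConstrSat (Mle β) (substConstr ct.constr τ) := by
    refine constrSat_substConstr_iff hσ ?_
    rintro _ ⟨u, hu, rfl⟩ h
    exact hy (mem_varsAll_of_mem_constr hct hu (mem_varsList_of_mem_subst hτ h))
  rw [satInst_substClass (Subst.comp_comm hσ hτ hστ hτy) hsat]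
  exact groundInstances_substClass hσ (fun x hx => hfix x (termVars_satInst_subset hτ hx))
    fun h => hy (varsAll_satInst_subset hτ h)

end Collapse

theorem reduce_constraint_variables_general {F : Type} [Nonempty F]
    (β : Tm F)
    (A : CClass F)
    (Γ : Set (Tm F))
    (y' : ℕ) (hy' : y' ∉ varsAll A) (σ : Subst F)
    (hσ1 : ∀ x ∈ (⋃ u ∈ Γ, Tm.varsIn u) \ termVars A, σ x = Tm.var y')
    (hσ2 : ∀ x, x ∉ (⋃ u ∈ Γ, Tm.varsIn u) \ termVars A → σ x = Tm.var x) :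
    Subsumes (Mle β) A (substClass A σ) ∧ Subsumes (Mle β) (substClass A σ) A ∧
      gnd (Mle β) A = gnd (Mle β) (substClass A σ) := by
  have hσ (x : ℕ) : σ x = var x ∨ σ x = var y' := by
    by_cases hx : x ∈ (⋃ u ∈ Γ, Tm.varsIn u) \ termVars A
    exacts [Or.inr (hσ1 x hx), Or.inl (hσ2 x hx)]
  have hgnd : gnd (Mle β) (substClass A σ) = gnd (Mle β) A :=
    gnd_substClass_eq hσ (fun x hx => hσ2 x fun h => h.2 hx) hy'
  exact ⟨subsumes_of_gnd_subset hgnd.le, subsumes_of_gnd_subset hgnd.ge, hgnd.symm⟩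

/-- Reduction of constraint-only variables: mapping all
variables that occur only in the (shared) constraint of a class to a single
fresh variable yields a mutually subsuming class with the same groundings. -/
theorem reduce_constraint_variables {F : Type} [Nonempty F]
    (β : Tm F) (hβ : β.Ground)
    (A : CClass F) (hAfin : A.Finite)
    (Γ : Set (Tm F)) (hconstr : ∀ ct ∈ A, CTerm.constr ct = Γ)
    (y' : ℕ) (hy' : y' ∉ varsAll A) (σ : Subst F)
    (hσ1 : ∀ x ∈ (⋃ u ∈ Γ, Tm.varsIn u) \ termVars A, σ x = Tm.var y')
    (hσ2 : ∀ x, x ∉ (⋃ u ∈ Γ, Tm.varsIn u) \ termVars A → σ x = Tm.var x) :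
    Subsumes (Mle β) A (substClass A σ) ∧ Subsumes (Mle β) (substClass A σ) A ∧
      gnd (Mle β) A = gnd (Mle β) (substClass A σ) :=
  reduce_constraint_variables_general β A Γ y' hy' σ hσ1 hσ2

end NGCC
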